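/- Let w be a pp-irreducible string and c < d positions of w with d ≤ c + ρ_w(c). Then 𝓕_w(c) ≥ 𝓕_w(d). -/
import Mathlib


/-!
Common definitions: strings as `List α` over an alphabet `α`, 1-based positions.
-/

variable {α : Type*}

/-- The substring `w[i:j]` (1-based, inclusive; empty when `j < i`). -/
def seg (w : List α) (i j : ℕ) : List α := (w.take j).drop (i - 1)

/-- `w` has an even palindrome of radius `r` centered at position `c`:
`r ≤ c`, `c + r ≤ |w|` and `w[c−k+1] = w[c+k]` for all `1 ≤ k ≤ r`
(here expressed with 0-based list indexing: `w[c−k]? = w[c+k−1]?`). -/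
def PalAt (w : List α) (c r : ℕ) : Prop :=
  r ≤ c ∧ c + r ≤ w.length ∧ ∀ k, 1 ≤ k → k ≤ r → w[c - k]? = w[c + k - 1]?

/-- `ρ_w(c)`: the maximal even-palindrome radius at center `c`. -/
noncomputable def rho (w : List α) (c : ℕ) : ℕ := sSup {r | PalAt w c r}

/-- The reduction relation: `x y yᴿ y z → x y z` for nonempty `y`. -/
def Reduces (w w' : List α) : Prop :=
  ∃ x y z : List α, y ≠ [] ∧ w = x ++ y ++ y.reverse ++ y ++ z ∧ w' = x ++ y ++ z

/-- A string is irreducible if no reduction applies to it. -/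
def ZIrreducible (w : List α) : Prop := ∀ w', ¬ Reduces w w'

def ZReducible (w : List α) : Prop := ∃ w', Reduces w w'

/-- `w` is pp-irreducible if its longest proper prefix `w[1:|w|−1]` is irreducible. -/
def PPIrreducible (w : List α) : Prop := ZIrreducible w.dropLast

/-- `w` is ss-reducible if it is reducible and pp-irreducible. -/
def SSReducible (w : List α) : Prop := ZReducible w ∧ PPIrreducible w

/-- A Z-shape occurrence `⟨p1, p2⟩` in `w`: with `s = p2 − p1 ≥ 1`, `p1 − s ≥ 0`,
`p2 + s ≤ |w|` and `w[p1−s+1 : p2+s] = x xᴿ x` where `x = w[p1−s+1 : p1]`. -/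
def ZOcc (w : List α) (p1 p2 : ℕ) : Prop :=
  p1 < p2 ∧ p2 - p1 ≤ p1 ∧ p2 + (p2 - p1) ≤ w.length ∧
    seg w (p1 - (p2 - p1) + 1) (p2 + (p2 - p1)) =
      seg w (p1 - (p2 - p1) + 1) p1 ++ (seg w (p1 - (p2 - p1) + 1) p1).reverse ++
        seg w (p1 - (p2 - p1) + 1) p1

/-- `c ⊏_w d` : `c ≤ d − ρ_w(d) ≤ d ≤ c + ρ_w(c) ≤ d + ρ_w(d)` with `c ≠ d`
(written without truncated subtraction). -/
def Sqsub (w : List α) (c d : ℕ) : Prop :=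
  c < d ∧ c + rho w d ≤ d ∧ d ≤ c + rho w c ∧ c + rho w c ≤ d + rho w d

/-- `𝓕_w(c)`: the maximum frontier over all palindrome chains from `c`
(a palindrome chain is a nonempty list starting at `c` whose consecutive
elements are related by `⊏_w`; its frontier is `e + ρ_w(e)` for its last element `e`). -/
noncomputable def maxFrontier (w : List α) (c : ℕ) : ℕ :=
  sSup {f | ∃ l : List ℕ, l.head? = some c ∧ l.Chain' (Sqsub w) ∧
      ∃ e, l.getLast? = some e ∧ f = e + rho w e}

/-- `𝓐_w(d)`: the smallest position `c` with `c ≤ d ≤ 𝓕_w(c)`. -/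
noncomputable def originator (w : List α) (d : ℕ) : ℕ :=
  sInf {c | 1 ≤ c ∧ c ≤ d ∧ d ≤ maxFrontier w c}

/-- A position `c` of a pp-irreducible string `w` is stable if `𝓕_w(c) < |w|`. -/
def Stable (w : List α) (c : ℕ) : Prop := maxFrontier w c < w.length

/-- `c` is strongly stable if every position in `[1:c]` is stable. -/
def StronglyStable (w : List α) (c : ℕ) : Prop := ∀ e, 1 ≤ e → e ≤ c → Stable w e

/-- `T` is the output of an end-to-end walk on the path graph labeled `u`:
there are vertices `p 0 = 0, …, p |T| = |u|`, each `≤ |u|`, consecutive ones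
adjacent, and `T[i] = u[max (p (i−1)) (p i)]` (1-based; here 0-based indexing). -/
def EndToEndWalkOutput (u T : List α) : Prop :=
  ∃ p : ℕ → ℕ, p 0 = 0 ∧ p T.length = u.length ∧
    (∀ i, i ≤ T.length → p i ≤ u.length) ∧
    (∀ i, i < T.length → p (i + 1) = p i + 1 ∨ p i = p (i + 1) + 1) ∧
    (∀ i, i < T.length → T[i]? = u[max (p i) (p (i + 1)) - 1]?)

/-- `P` is accurate enough between `a` and `b`:
`min (P e) (b − e) = min (ρ_w e) (b − e)` for all `e ∈ [a:b]`. -/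
def AccEnough (w : List α) (P : ℕ → ℕ) (a b : ℕ) : Prop :=
  ∀ e, a ≤ e → e ≤ b → min (P e) (b - e) = min (rho w e) (b - e)

open Classical in
/-- `ν_w(c)`: the largest `e` with `e ⊏_w c`, or `1` if there is none. -/
noncomputable def nu (w : List α) (c : ℕ) : ℕ :=
  if ∃ e, Sqsub w e c then sSup {e | Sqsub w e c} else 1

/-- `c` is left-good w.r.t. `P` if `P` is accurate enough between `ν_w(c)` and `c`. -/
def LeftGood (w : List α) (P : ℕ → ℕ) (c : ℕ) : Prop := AccEnough w P (nu w c) c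

/-- `c` is right-good w.r.t. `P` if `P` is accurate enough between `c` and `c + ρ_w(c)`. -/
def RightGood (w : List α) (P : ℕ → ℕ) (c : ℕ) : Prop := AccEnough w P c (c + rho w c)

/-! Auxiliary lemmas -/

lemma palSet_bdd (w : List α) (c : ℕ) : BddAbove {r | PalAt w c r} :=
  ⟨c, fun _ hr => hr.1⟩

lemma palAt_zero (w : List α) {c : ℕ} (h : c ≤ w.length) : PalAt w c 0 :=
  ⟨Nat.zero_le _, by omega, fun k hk hk' => by omega⟩

lemma palAt_rho (w : List α) {c : ℕ} (h : c ≤ w.length) : PalAt w c (rho w c) := by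
  have h0 : (0:ℕ) ∈ {r | PalAt w c r} := palAt_zero w h
  exact Nat.sSup_mem ⟨0, h0⟩ (palSet_bdd w c)

lemma le_rho {w : List α} {c r : ℕ} (h : PalAt w c r) : r ≤ rho w c :=
  le_csSup (palSet_bdd w c) h

lemma rho_pos_palAt {w : List α} {c : ℕ} (h : 0 < rho w c) : PalAt w c (rho w c) := by
  rcases Set.eq_empty_or_nonempty {r | PalAt w c r} with he | hne
  · exfalso
    have : rho w c = 0 := by rw [rho, he, csSup_empty]; rfl
    omega
  · exact Nat.sSup_mem hne (palSet_bdd w c)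

lemma frontier_le_len {w : List α} {c : ℕ} (h : c ≤ w.length) : c + rho w c ≤ w.length :=
  (palAt_rho w h).2.1

lemma pal_slice {w : List α} {c s : ℕ} (hs : s ≤ c) (hlen : c + s ≤ w.length)
    (hp : ∀ k, 1 ≤ k → k ≤ s → w[c - k]? = w[c + k - 1]?) :
    (w.take c).drop (c - s) = ((w.take (c + s)).drop c).reverse := by
  have hlen1 : ((w.take c).drop (c - s)).length = s := by
    simp [List.length_drop, List.length_take]; omega
  have hlen2 : (((w.take (c + s)).drop c).reverse).length = s := by
    simp [List.length_drop, List.length_take]; omega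
  apply List.ext_getElem (by omega)
  intro i h1 h2
  have hi : i < s := by omega
  have key : w[c - (s - i)]? = w[c + (s - i) - 1]? := hp (s - i) (by omega) (by omega)
  have e1 : c - (s - i) = c - s + i := by omega
  have e2 : c + (s - i) - 1 = c + (s - 1 - i) := by omega
  rw [e1, e2] at key
  have hL : c - s + i < w.length := by omega
  have hR : c + (s - 1 - i) < w.length := by omega
  rw [List.getElem?_eq_getElem hL, List.getElem?_eq_getElem hR] at key
  have key' : w[c - s + i]'hL = w[c + (s - 1 - i)]'hR := Option.some.inj key
  rw [List.getElem_drop, List.getElem_take]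
  rw [List.getElem_reverse]
  rw [List.getElem_drop, List.getElem_take]
  convert key' using 2
  simp [List.length_drop, List.length_take]
  omega

lemma slice_split {w : List α} {a b N : ℕ} (hab : a ≤ b) (hbN : b ≤ N) (hN : N ≤ w.length) :
    (w.take N).drop a = (w.take b).drop a ++ (w.take N).drop b := by
  conv_lhs => rw [show w.take N = w.take b ++ (w.take N).drop b by
    conv_lhs => rw [← List.take_append_drop b (w.take N)]
    rw [List.take_take, Nat.min_eq_left hbN]]
  rw [List.drop_append]
  have : a - (w.take b).length = 0 := by simp [List.length_take]; omega
  rw [this, List.drop_zero]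

lemma armA {w : List α} (hpp : PPIrreducible w) {c d : ℕ} (hc : 1 ≤ c) (hcd : c < d)
    (h : d ≤ c + rho w c) : c + rho w d ≤ d := by
  by_contra hcon
  push_neg at hcon
  set s := d - c with hs
  have hs1 : 1 ≤ s := by omega
  have hrd : 0 < rho w d := by omega
  have hpd := rho_pos_palAt hrd
  have hdl : d + rho w d ≤ w.length := hpd.2.1
  have hrc : 0 < rho w c := by omega
  have hpc := rho_pos_palAt hrc
  have hcl : c + rho w c ≤ w.length := hpc.2.1
  have hsc : s ≤ c := le_trans (by omega : s ≤ rho w c) hpc.1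
  have hN : d + s ≤ w.length - 1 := by omega
  have hwlen : 1 ≤ w.length := by omega
  have e1 : (w.take c).drop (c - s) = ((w.take (c + s)).drop c).reverse :=
    pal_slice hsc (by omega) (fun k hk hks => hpc.2.2 k hk (by omega))
  have e2 : (w.take d).drop (d - s) = ((w.take (d + s)).drop d).reverse :=
    pal_slice (by omega) (by omega) (fun k hk hks => hpd.2.2 k hk (by omega))
  have hcs : c + s = d := by omega
  have hds : d - s = c := by omega
  rw [hcs] at e1
  rw [hds] at e2
  set Y : List α := ((w.take d).drop c).reverse with hY
  have hYne : Y ≠ [] := by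
    have : Y.length = s := by
      simp [hY, List.length_drop, List.length_take]; omega
    intro hnil; rw [hnil] at this; simp at this; omega
  -- decompose w.dropLast
  set u := w.dropLast with hu
  have hulen : u.length = w.length - 1 := by simp [hu]
  have hutake : u.take (d + s) = w.take (d + s) := by
    rw [hu, List.dropLast_eq_take, List.take_take, Nat.min_eq_left hN]
  have hsplit : u = w.take (d + s) ++ u.drop (d + s) := by
    conv_lhs => rw [← List.take_append_drop (d + s) u]
    rw [hutake]
  have hA : w.take (d + s) = w.take (c - s) ++ (w.take (d + s)).drop (c - s) := by
    conv_lhs => rw [← List.take_append_drop (c - s) (w.take (d + s))]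
    rw [List.take_take, Nat.min_eq_left (by omega)]
  have hB : (w.take (d + s)).drop (c - s)
      = (w.take c).drop (c - s) ++ (w.take (d + s)).drop c :=
    slice_split (by omega) (by omega) (by omega)
  have hC : (w.take (d + s)).drop c
      = (w.take d).drop c ++ (w.take (d + s)).drop d :=
    slice_split (by omega) (by omega) (by omega)
  have hmid1 : (w.take c).drop (c - s) = Y := by rw [e1, hY]
  have hmid2 : (w.take d).drop c = Y.reverse := by rw [hY, List.reverse_reverse]
  have hmid3 : (w.take (d + s)).drop d = Y := by
    rw [hY, e2, List.reverse_reverse]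
  have hfinal : u = w.take (c - s) ++ Y ++ Y.reverse ++ Y ++ u.drop (d + s) := by
    conv_lhs => rw [hsplit, hA, hB, hC, hmid1, hmid2, hmid3]
    simp [List.append_assoc]
  exact hpp _ ⟨w.take (c - s), Y, u.drop (d + s), hYne, hfinal, rfl⟩

lemma sqsub_right_le {w : List α} {a b : ℕ} (hab : Sqsub w a b) : b ≤ w.length := by
  obtain ⟨h1, _, h2, _⟩ := hab
  have hpos : 0 < rho w a := by omega
  have := (rho_pos_palAt hpos).2.1
  omega

lemma chain_last_le (w : List α) : ∀ l : List ℕ, l.Chain' (Sqsub w) →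
    ∀ x, l.head? = some x → x ≤ w.length → ∀ e, l.getLast? = some e → e ≤ w.length := by
  intro l
  induction l with
  | nil => intro _ x hx; simp at hx
  | cons a rest ih =>
    intro hch x hx hxl e he
    rw [List.head?_cons, Option.some_inj] at hx
    subst hx
    cases rest with
    | nil =>
      obtain rfl : e = a := by simpa using he.symm
      exact hxl
    | cons b rest2 =>
      have h1 : Sqsub w a b := (List.isChain_cons_cons.mp hch).1
      exact ih (List.isChain_cons_cons.mp hch).2 b rfl (sqsub_right_le h1) e
        (by rwa [List.getLast?_cons_cons] at he)

lemma mf_bdd (w : List α) (c : ℕ) : BddAbove {f | ∃ l : List ℕ, l.head? = some c ∧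
    l.Chain' (Sqsub w) ∧ ∃ e, l.getLast? = some e ∧ f = e + rho w e} := by
  refine ⟨max (c + rho w c) w.length, ?_⟩
  rintro f ⟨l, hh, hch, e, he, rfl⟩
  cases l with
  | nil => simp at hh
  | cons a rest =>
    rw [List.head?_cons, Option.some_inj] at hh
    subst hh
    cases rest with
    | nil =>
      obtain rfl : e = a := by simpa using he.symm
      exact le_max_left _ _
    | cons b rest2 =>
      have h1 : Sqsub w a b := (List.isChain_cons_cons.mp hch).1
      have hel : e ≤ w.length := chain_last_le w (b :: rest2) (List.isChain_cons_cons.mp hch).2 b rfl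
        (sqsub_right_le h1) e (by rwa [List.getLast?_cons_cons] at he)
      exact le_max_of_le_right (frontier_le_len hel)

lemma self_le_mf (w : List α) (c : ℕ) : c + rho w c ≤ maxFrontier w c :=
  le_csSup (mf_bdd w c) ⟨[c], rfl, List.isChain_singleton c, c, rfl, rfl⟩

lemma chain_bound (w : List α) (hpp : PPIrreducible w) (c : ℕ) (hc : 1 ≤ c)
    (hcl : c ≤ w.length) :
    ∀ l : List ℕ, l.Chain' (Sqsub w) → ∀ x, l.head? = some x → c < x → x ≤ c + rho w c →
      ∀ e, l.getLast? = some e → e + rho w e ≤ maxFrontier w c := by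
  intro l
  induction l with
  | nil => intro _ x hx; simp at hx
  | cons a rest ih =>
    intro hch x hx hcx hxc e he
    rw [List.head?_cons, Option.some_inj] at hx
    subst hx
    by_cases hsq : Sqsub w c a
    · have hch' : (c :: a :: rest).Chain' (Sqsub w) := List.isChain_cons_cons.mpr ⟨hsq, hch⟩
      exact le_csSup (mf_bdd w c)
        ⟨c :: a :: rest, rfl, hch', e, by rwa [List.getLast?_cons_cons], rfl⟩
    · have harm : c + rho w a ≤ a := armA hpp hc hcx hxc
      have hxx : a + rho w a < c + rho w c := by
        by_contra hno
        exact hsq ⟨hcx, harm, hxc, by omega⟩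
      cases rest with
      | nil =>
        obtain rfl : e = a := by simpa using he.symm
        exact le_trans (le_of_lt hxx) (self_le_mf w c)
      | cons b rest2 =>
        have h1 : Sqsub w a b := (List.isChain_cons_cons.mp hch).1
        have hb : b ≤ a + rho w a := h1.2.2.1
        have hxb : a < b := h1.1
        exact ih (List.isChain_cons_cons.mp hch).2 b rfl (by omega) (by omega) e
          (by rwa [List.getLast?_cons_cons] at he)

/-- in a pp-irreducible string, if `c < d ≤ c + ρ_w(c)` then
`𝓕_w(c) ≥ 𝓕_w(d)`. -/

theorem maxFrontier_mono_arm (w : List α) (hpp : PPIrreducible w) (c d : ℕ)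
    (hc : 1 ≤ c) (hcd : c < d) (hd : d ≤ w.length) (h : d ≤ c + rho w c) :
    maxFrontier w d ≤ maxFrontier w c := by
  rw [maxFrontier]
  refine csSup_le ⟨d + rho w d, [d], rfl, List.isChain_singleton d, d, rfl, rfl⟩ ?_
  rintro f ⟨l, hh, hch, e, he, rfl⟩
  exact chain_bound w hpp c hc (by omega) l hch d hh hcd h e he
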